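/- arXiv:2306.17341 — 2 statements merged into one kernel-verified Lean document; each statement's English description precedes it below -/
import Mathlib

section
/- In the 4-candidate, 10000-voter election of Table 1 (ballots: 1799 A>B, 1801 A>B>C>D, 100 A>C>D, 901 B>C>A>D, 900 B>D, 498 C>B>D>A, 2000 C>D>A, 1400 D>B, 601 D>C), the sequential RCV winner set for 2 seats is {C, D}: C is the IRV winner, and after deleting C from all ballots, D wins the resulting IRV election. -/
namespace Voting

variable {C : Type*} [DecidableEq C]

/-- A profile is a multiset of (possibly partial) preference ballots,
each ballot being a list of candidates from most- to least-preferred. -/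
abbrev Profile (C : Type*) := Multiset (List C)

/-- The highest-ranked candidate on ballot `b` among the still-hopeful candidates `h`. -/
def restrictedHead (h : Finset C) (b : List C) : Option C :=
  (b.filter (fun c => decide (c ∈ h))).head?

/-- First-place votes of `x` among hopeful candidates `h`. -/
def fpv (P : Profile C) (h : Finset C) (x : C) : ℕ :=
  Multiset.card (P.filter (fun b => restrictedHead h b = some x))

/-- Number of non-exhausted ballots (ballots ranking some hopeful candidate). -/
def active (P : Profile C) (h : Finset C) : ℕ :=
  Multiset.card (P.filter (fun b => (restrictedHead h b).isSome))

/-- `IRVwins P h w` : starting from the hopeful set `h`, instant runoff voting can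
declare `w` the winner: either `w` has a strict majority of first-place votes among
non-exhausted ballots, or no candidate has such a majority, a candidate with the fewest
first-place votes is eliminated, and `w` wins the resulting election. -/
inductive IRVwins (P : Profile C) : Finset C → C → Prop
  | maj {h : Finset C} {w : C} : w ∈ h → 2 * fpv P h w > active P h → IRVwins P h w
  | elim {h : Finset C} {l w : C} : l ∈ h →
      (∀ x ∈ h, fpv P h l ≤ fpv P h x) →
      (¬ ∃ x ∈ h, 2 * fpv P h x > active P h) →
      IRVwins P (h.erase l) w → IRVwins P h w

/-- Delete the candidates in `W` from every ballot of `P`. -/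
def removeCands (W : Finset C) (P : Profile C) : Profile C :=
  P.map (fun b => b.filter (fun c => decide (c ∉ W)))

/-- `SeqRCV P S W` : sequential RCV can fill `S` seats with the winner set `W`,
electing at each stage the IRV winner of the profile with all previous winners deleted. -/
inductive SeqRCV [Fintype C] (P : Profile C) : ℕ → Finset C → Prop
  | zero : SeqRCV P 0 ∅
  | succ {S : ℕ} {W : Finset C} {w : C} : SeqRCV P S W → w ∉ W →
      IRVwins (removeCands W P) Finset.univ w → SeqRCV P (S + 1) (insert w W)

/-- Weighted ballots for STV: each ballot carries a fractional vote weight. -/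
abbrev WProfile (C : Type*) := Multiset (List C × ℚ)

/-- The (fractional) vote total of candidate `x` among hopefuls `h`. -/
def tally (h : Finset C) (B : WProfile C) (x : C) : ℚ :=
  (B.map (fun p => if restrictedHead h p.1 = some x then p.2 else 0)).sum

/-- When `a` is elected with quota `q`, the ballots currently counting for `a` are
rescaled by `surplus / total`, effecting the proportional surplus transfer. -/
def scaleElected (h : Finset C) (B : WProfile C) (a : C) (q : ℚ) : WProfile C :=
  B.map (fun p => if restrictedHead h p.1 = some a
    then (p.1, p.2 * ((tally h B a - q) / tally h B a)) else p)

/-- `STVrun S q h B E F` : from the state with hopefuls `h`, weighted ballots `B` and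
already-elected set `E`, the STV process with `S` seats and quota `q` can terminate
with elected set `F`. -/
inductive STVrun (S : ℕ) (q : ℚ) : Finset C → WProfile C → Finset C → Finset C → Prop
  | done {h : Finset C} {B : WProfile C} {E : Finset C} :
      E.card = S → STVrun S q h B E E
  | fill {h : Finset C} {B : WProfile C} {E : Finset C} :
      E.card < S → E.card + h.card = S → STVrun S q h B E (E ∪ h)
  | elect {h : Finset C} {B : WProfile C} {E F : Finset C} {a : C} :
      E.card < S → a ∈ h → q ≤ tally h B a →
      STVrun S q (h.erase a) (scaleElected h B a q) (insert a E) F →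
      STVrun S q h B E F
  | elim {h : Finset C} {B : WProfile C} {E F : Finset C} {l : C} :
      E.card < S → S < E.card + h.card → l ∈ h →
      (∀ x ∈ h, ¬ q ≤ tally h B x) →
      (∀ x ∈ h, tally h B l ≤ tally h B x) →
      STVrun S q (h.erase l) B E F →
      STVrun S q h B E F

/-- The STV quota for `V` voters and `S` seats: `⌊V/(S+1)⌋ + 1`. -/
def quota (V S : ℕ) : ℚ := ((V / (S + 1) : ℕ) : ℚ) + 1

/-- `STVwins P S W` : single transferable vote with `S` seats can elect the winner set
`W` from the profile `P` (every ballot starting with weight 1). -/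
def STVwins [Fintype C] (P : Profile C) (S : ℕ) (W : Finset C) : Prop :=
  STVrun S (quota (Multiset.card P) S) Finset.univ (P.map (fun b => (b, (1 : ℚ)))) ∅ W

/-- Voter with ballot `b` prefers `x` to `y` (weak order model: unranked candidates
are tied for last). -/
def prefers (b : List C) (x y : C) : Prop :=
  x ∈ b ∧ (y ∉ b ∨ b.idxOf x < b.idxOf y)

instance (b : List C) (x y : C) : Decidable (prefers b x y) :=
  inferInstanceAs (Decidable (x ∈ b ∧ (y ∉ b ∨ b.idxOf x < b.idxOf y)))

/-- Number of voters preferring `x` to `y`. -/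
def prefCount (P : Profile C) (x y : C) : ℕ :=
  Multiset.card (P.filter (fun b => prefers b x y))

/-- `W` is a Condorcet committee: every member beats every non-member head-to-head. -/
def CondorcetCommittee (P : Profile C) (W : Finset C) : Prop :=
  ∀ a ∈ W, ∀ b ∉ W, prefCount P a b > prefCount P b a

/-- Number of voters none of whose top `S` ranked candidates are in `W`. -/
def misrepCount (P : Profile C) (S : ℕ) (W : Finset C) : ℕ :=
  Multiset.card (P.filter (fun b => ∀ x ∈ b.take S, x ∉ W))

/-- Number of voters all of whose top `S` ranked candidates are in `W`. -/
def maxrepCount (P : Profile C) (S : ℕ) (W : Finset C) : ℕ :=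
  Multiset.card (P.filter (fun b => ∀ x ∈ b.take S, x ∈ W))

/-- Degree of misrepresentation, as a percentage. -/
def misrepDeg (P : Profile C) (S : ℕ) (W : Finset C) : ℚ :=
  100 * (misrepCount P S W : ℚ) / (Multiset.card P : ℚ)

/-- Degree of maximal representation, as a percentage. -/
def maxrepDeg (P : Profile C) (S : ℕ) (W : Finset C) : ℚ :=
  100 * (maxrepCount P S W : ℚ) / (Multiset.card P : ℚ)

end Voting
open Voting

/-- The four candidates of Table 1. -/
notation "cA" => (0 : Fin 4)
notation "cB" => (1 : Fin 4)
notation "cC" => (2 : Fin 4)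
notation "cD" => (3 : Fin 4)

/-- The preference profile of Table 1 (10000 voters). -/
def P1 : Voting.Profile (Fin 4) :=
  Multiset.replicate 1799 [cA, cB] +
  Multiset.replicate 1801 [cA, cB, cC, cD] +
  Multiset.replicate 100 [cA, cC, cD] +
  Multiset.replicate 901 [cB, cC, cA, cD] +
  Multiset.replicate 900 [cB, cD] +
  Multiset.replicate 498 [cC, cB, cD, cA] +
  Multiset.replicate 2000 [cC, cD, cA] +
  Multiset.replicate 1400 [cD, cB] +
  Multiset.replicate 601 [cD, cC]

private lemma card_filter_rep {α} (p : α → Prop) [DecidablePred p] (n : ℕ) (a : α) :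
    Multiset.card ((Multiset.replicate n a).filter p) = if p a then n else 0 := by
  induction n with
  | zero => simp
  | succ n ih =>
    rw [Multiset.replicate_succ, Multiset.filter_cons]
    split <;> simp [ih, *]

set_option maxRecDepth 10000 in
private lemma fpv_P1 (h : Finset (Fin 4)) (x : Fin 4) :
    fpv P1 h x =
      (if restrictedHead h [cA, cB] = some x then 1799 else 0) +
      (if restrictedHead h [cA, cB, cC, cD] = some x then 1801 else 0) +
      (if restrictedHead h [cA, cC, cD] = some x then 100 else 0) +
      (if restrictedHead h [cB, cC, cA, cD] = some x then 901 else 0) +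
      (if restrictedHead h [cB, cD] = some x then 900 else 0) +
      (if restrictedHead h [cC, cB, cD, cA] = some x then 498 else 0) +
      (if restrictedHead h [cC, cD, cA] = some x then 2000 else 0) +
      (if restrictedHead h [cD, cB] = some x then 1400 else 0) +
      (if restrictedHead h [cD, cC] = some x then 601 else 0) := by
  simp only [fpv, P1, Multiset.filter_add, Multiset.card_add, card_filter_rep]

set_option maxRecDepth 10000 in
private lemma active_P1 (h : Finset (Fin 4)) :
    active P1 h =
      (if (restrictedHead h [cA, cB]).isSome then 1799 else 0) +
      (if (restrictedHead h [cA, cB, cC, cD]).isSome then 1801 else 0) +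
      (if (restrictedHead h [cA, cC, cD]).isSome then 100 else 0) +
      (if (restrictedHead h [cB, cC, cA, cD]).isSome then 901 else 0) +
      (if (restrictedHead h [cB, cD]).isSome then 900 else 0) +
      (if (restrictedHead h [cC, cB, cD, cA]).isSome then 498 else 0) +
      (if (restrictedHead h [cC, cD, cA]).isSome then 2000 else 0) +
      (if (restrictedHead h [cD, cB]).isSome then 1400 else 0) +
      (if (restrictedHead h [cD, cC]).isSome then 601 else 0) := by
  simp only [active, P1, Multiset.filter_add, Multiset.card_add, card_filter_rep]


/-- the Table-1 profile with candidate C deleted from every ballot -/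
private def P2 : Voting.Profile (Fin 4) :=
  Multiset.replicate 1799 [cA, cB] +
  Multiset.replicate 1801 [cA, cB, cD] +
  Multiset.replicate 100 [cA, cD] +
  Multiset.replicate 901 [cB, cA, cD] +
  Multiset.replicate 900 [cB, cD] +
  Multiset.replicate 498 [cB, cD, cA] +
  Multiset.replicate 2000 [cD, cA] +
  Multiset.replicate 1400 [cD, cB] +
  Multiset.replicate 601 [cD]

private lemma P2_eq : removeCands {cC} P1 = P2 := by
  simp only [removeCands, P1, P2, Multiset.map_add, Multiset.map_replicate]
  rfl

private lemma fpv_P2 (h : Finset (Fin 4)) (x : Fin 4) :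
    fpv P2 h x =
      (if restrictedHead h [cA, cB] = some x then 1799 else 0) +
      (if restrictedHead h [cA, cB, cD] = some x then 1801 else 0) +
      (if restrictedHead h [cA, cD] = some x then 100 else 0) +
      (if restrictedHead h [cB, cA, cD] = some x then 901 else 0) +
      (if restrictedHead h [cB, cD] = some x then 900 else 0) +
      (if restrictedHead h [cB, cD, cA] = some x then 498 else 0) +
      (if restrictedHead h [cD, cA] = some x then 2000 else 0) +
      (if restrictedHead h [cD, cB] = some x then 1400 else 0) +
      (if restrictedHead h [cD] = some x then 601 else 0) := by
  simp only [fpv, P2, Multiset.filter_add, Multiset.card_add, card_filter_rep]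

private lemma active_P2 (h : Finset (Fin 4)) :
    active P2 h =
      (if (restrictedHead h [cA, cB]).isSome then 1799 else 0) +
      (if (restrictedHead h [cA, cB, cD]).isSome then 1801 else 0) +
      (if (restrictedHead h [cA, cD]).isSome then 100 else 0) +
      (if (restrictedHead h [cB, cA, cD]).isSome then 901 else 0) +
      (if (restrictedHead h [cB, cD]).isSome then 900 else 0) +
      (if (restrictedHead h [cB, cD, cA]).isSome then 498 else 0) +
      (if (restrictedHead h [cD, cA]).isSome then 2000 else 0) +
      (if (restrictedHead h [cD, cB]).isSome then 1400 else 0) +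
      (if (restrictedHead h [cD]).isSome then 601 else 0) := by
  simp only [active, P2, Multiset.filter_add, Multiset.card_add, card_filter_rep]

private lemma irv1 : IRVwins P1 Finset.univ cC := by
  apply IRVwins.elim (l := cB) (by decide)
  · intro x _; simp only [fpv_P1]; revert x; decide
  · simp only [fpv_P1, active_P1]; decide
  apply IRVwins.elim (l := cD) (by decide)
  · intro x _; simp only [fpv_P1]; revert x; decide
  · simp only [fpv_P1, active_P1]; decide
  exact IRVwins.maj (by decide) (by simp only [fpv_P1, active_P1]; decide)

private lemma irv2 : IRVwins P2 Finset.univ cD := by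
  apply IRVwins.elim (l := cC) (by decide)
  · intro x _; simp only [fpv_P2]; revert x; decide
  · simp only [fpv_P2, active_P2]; decide
  apply IRVwins.elim (l := cB) (by decide)
  · intro x _; simp only [fpv_P2]; revert x; decide
  · simp only [fpv_P2, active_P2]; decide
  exact IRVwins.maj (by decide) (by simp only [fpv_P2, active_P2]; decide)

/-- the sequential RCV winner set of the Table 1 election with 2 seats
is {C, D}: C is the IRV winner, and after deleting C from all ballots D wins the
resulting IRV election. -/
theorem stmt1 :
    IRVwins P1 Finset.univ cC ∧
    IRVwins (removeCands {cC} P1) Finset.univ cD ∧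
    SeqRCV P1 2 {cC, cD} := by
  refine ⟨irv1, P2_eq ▸ irv2, ?_⟩
  have e0 : removeCands ∅ P1 = P1 := by
    simp [removeCands, List.filter_true]
  have e1 : ({cC, cD} : Finset (Fin 4)) = insert cD (insert cC ∅) := by decide
  rw [e1]
  refine SeqRCV.succ (SeqRCV.succ SeqRCV.zero (by decide) ?_) (by decide) ?_
  · rw [e0]; exact irv1
  · have : (insert cC ∅ : Finset (Fin 4)) = {cC} := by decide
    rw [this, P2_eq]; exact irv2
end

section
/- In the election of Table 1 (ballots: 1799 A>B, 1801 A>B>C>D, 100 A>C>D, 901 B>C>A>D, 900 B>D, 498 C>B>D>A, 2000 C>D>A, 1400 D>B, 601 D>C among candidates {A,B,C,D}), no Condorcet committee of size 2 exists. -/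
open Voting

def pcval : Fin 4 → Fin 4 → ℕ := fun x y =>
  (![![0, 5700, 3700, 4601], ![3699, 0, 6801, 5899],
     ![4000, 3199, 0, 5300], ![5399, 4101, 2901, 0]] x) y

lemma filter_replicate' {α : Type*} (p : α → Prop) [DecidablePred p] (n : ℕ) (a : α) :
    Multiset.filter p (Multiset.replicate n a) =
      if p a then Multiset.replicate n a else 0 := by
  induction n with
  | zero => simp
  | succ n ih =>
    rw [Multiset.replicate_succ, Multiset.filter_cons, ih]
    by_cases h : p a <;> simp [h, Multiset.replicate_succ]

lemma pc_eq (x y : Fin 4) :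
    prefCount P1 x y =
      (if prefers [cA, cB] x y then 1799 else 0) +
      (if prefers [cA, cB, cC, cD] x y then 1801 else 0) +
      (if prefers [cA, cC, cD] x y then 100 else 0) +
      (if prefers [cB, cC, cA, cD] x y then 901 else 0) +
      (if prefers [cB, cD] x y then 900 else 0) +
      (if prefers [cC, cB, cD, cA] x y then 498 else 0) +
      (if prefers [cC, cD, cA] x y then 2000 else 0) +
      (if prefers [cD, cB] x y then 1400 else 0) +
      (if prefers [cD, cC] x y then 601 else 0) := by
  simp only [prefCount, P1, Multiset.filter_add, Multiset.card_add, filter_replicate',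
    apply_ite Multiset.card, Multiset.card_replicate, Multiset.card_zero]

lemma pc_all (x y : Fin 4) : prefCount P1 x y = pcval x y := by
  fin_cases x <;> fin_cases y <;> · rw [pc_eq]; decide

/-- the Table 1 election has no Condorcet committee of size 2
(partial ballots interpreted under the weak order model). -/
theorem stmt3 :
    ¬ ∃ W : Finset (Fin 4), W.card = 2 ∧ CondorcetCommittee P1 W := by
  rintro ⟨W, hcard, hcc⟩
  have h2 : ∀ a ∈ W, ∀ b ∉ W, pcval a b > pcval b a := fun a ha b hb => by
    rw [← pc_all, ← pc_all]; exact hcc a ha b hb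
  have key : ∀ V : Finset (Fin 4), V.card = 2 → ∃ a ∈ V, ∃ b ∉ V, pcval a b ≤ pcval b a := by
    decide
  obtain ⟨a, ha, b, hb, hle⟩ := key W hcard
  exact absurd (h2 a ha b hb) (not_lt.mpr hle)
end
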